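/- arXiv:1410.1460 — 3 statements merged into one kernel-verified Lean document; each statement's English description precedes it below -/
import Mathlib

section
/- (Theorem 3.2, partition function) Set U_{ij} = Σ_{m∈ℕ} λ̄_i(m;j)/μ̄_i(m;j) for i ≠ j and L_j = Σ_{m∈ℕ} λ̄_j(m;j)·γ̄_j(m)/μ̄_j(m;j). If U_{ij} < ∞ for all i ≠ j and L_j < ∞ for all j (sub-criticality), then the family of weights w(j,n) = ∏_{q∈Λ} [λ̄_q(n_q;j)/μ̄_q(n_q;j)] · γ̄_j(n_j), indexed by j ∈ Λ and n : Λ → ℕ, is summable and Σ_{j∈Λ} Σ_{n : Λ → ℕ} w(j,n) = Σ_{j∈Λ} L_j · ∏_{i∈Λ, i≠j} U_{ij}; consequently π(j,n) = w(j,n)/Ξ_Λ with Ξ_Λ = Σ_{j∈Λ} L_j ∏_{i≠j} U_{ij} is a probability distribution on Λ × ℕ^Λ. -/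
/-!
For fixed `j` the weight `w(j, n)` is a product of one factor per coordinate
`n q`, so by the product formula for series of nonnegative terms its sum over `n : Λ → ℕ` is
`L_j ∏_{i ≠ j} U_{ij}`; summing over the finitely many `j` gives `Ξ_Λ`. Every series defining
`U_{ij}` and `L_j` begins with the empty-product term `1`, so `Ξ_Λ > 0` and `w / Ξ_Λ` sums to `1`.
-/

open Finset

universe u v

theorem hasSum_pi_prod_of_nonneg {ι : Type u} [Fintype ι] {κ : ι → Type v}
    {f : ∀ i, κ i → ℝ} {T : ι → ℝ} (hf : ∀ i m, 0 ≤ f i m) (hT : ∀ i, HasSum (f i) (T i)) :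
    HasSum (fun n : ∀ i, κ i => ∏ i, f i (n i)) (∏ i, T i) := by
  have key := Fintype.induction_empty_option
    (P := fun ι [Fintype ι] => ∀ (κ : ι → Type v) (f : ∀ i, κ i → ℝ) (T : ι → ℝ),
      (∀ i m, 0 ≤ f i m) → (∀ i, HasSum (f i) (T i)) →
      HasSum (fun n : ∀ i, κ i => ∏ i, f i (n i)) (∏ i, T i)) ?_ ?_ ?_ ι
  · exact key κ f T hf hT
  · intro α β _ e ih κ f T hf hT
    let _ := Fintype.ofEquiv β e.symm
    have hα := ih (fun a => κ (e a)) (fun a => f (e a)) (fun a => T (e a))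
      (fun a => hf (e a)) (fun a => hT (e a))
    rw [← (Equiv.piCongrLeft κ e).hasSum_iff]
    convert hα using 1
    · funext n
      exact (Fintype.prod_equiv e _ _ fun a => by simp).symm
    · exact (Fintype.prod_equiv e _ _ fun a => rfl).symm
  · intro κ f T _ _
    simp
  · intro α _ ih κ f T hf hT
    have hrest := ih _ _ _ (fun a => hf (some a)) (fun a => hT (some a))
    have hmul := (hT none).mul hrest <|
      (hT none).summable.mul_of_nonneg hrest.summable (hf none)
        fun n => prod_nonneg fun a _ => hf (some a) (n a)
    rw [Fintype.prod_option, ← (Equiv.piOptionEquivProd (β := κ)).symm.hasSum_iff]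
    exact hmul.congr_fun fun p => by simp [Fintype.prod_option, Equiv.piOptionEquivProd]

theorem hasSum_prod_of_fintype_left {α β M : Type*} [Fintype α] [AddCommMonoid M]
    [TopologicalSpace M] [ContinuousAdd M] {f : α × β → M} {s : α → M}
    (hs : ∀ a, HasSum (fun b => f (a, b)) (s a)) : HasSum f (∑ a, s a) := by
  classical
  have hrow : ∀ a, HasSum (fun p : α × β => if p.1 = a then f p else 0) (s a) := fun a =>
    (Prod.mk_right_injective a).hasSum_iff (fun p hp => if_neg fun h => hp ⟨p.2, by simp [← h]⟩)
      |>.mp ((hs a).congr_fun fun b => if_pos rfl)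
  exact (hasSum_sum fun a _ => hrow a).congr_fun fun p => by simp

theorem hasSum_pi_prod_mul_apply_of_nonneg {ι κ : Type*} [Fintype ι] [DecidableEq ι]
    {a : ι → κ → ℝ} {c : κ → ℝ} {T : ι → ℝ} {S : ℝ} (j : ι)
    (ha : ∀ i m, 0 ≤ a i m) (hc : ∀ m, 0 ≤ c m)
    (hT : ∀ i ≠ j, HasSum (a i) (T i)) (hS : HasSum (fun m => a j m * c m) S) :
    HasSum (fun n : ι → κ => (∏ i, a i (n i)) * c (n j)) (S * ∏ i ∈ univ.erase j, T i) := by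
  have h := hasSum_pi_prod_of_nonneg (κ := fun _ => κ)
    (f := fun i m => if i = j then a j m * c m else a i m) (T := fun i => if i = j then S else T i)
    (fun i m => by split_ifs; exacts [mul_nonneg (ha j m) (hc m), ha i m])
    (fun i => by split_ifs with hij; exacts [hij ▸ hS, hT i hij])
  have off_j : ∀ g h : ι → ℝ, ∏ i ∈ univ.erase j, (if i = j then g i else h i) =
      ∏ i ∈ univ.erase j, h i := fun g h => prod_ite_of_false (fun i hi => ne_of_mem_erase hi) _ _
  simp only [← mul_prod_erase univ _ (mem_univ j), if_pos, off_j] at h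
  refine h.congr_fun fun n => ?_
  rw [← mul_prod_erase univ _ (mem_univ j)]
  ring

theorem general_rw_jackson_partition_function_general
    (Λ : Type*) [Fintype Λ] [DecidableEq Λ] [Nonempty Λ]
    (lam mu : Λ → ℕ → Λ → ℝ) (gam : Λ → ℕ → ℝ)
    (hlam : ∀ i m j, 0 ≤ lam i m j) (hmu : ∀ i m j, 0 < mu i m j)
    (hgam : ∀ i m, 0 < gam i m)
    (lamBar muBar : Λ → ℕ → Λ → ℝ) (gamBar : Λ → ℕ → ℝ)
    (hlamBar : ∀ i m j, lamBar i m j = ∏ u ∈ Finset.range m, lam i u j)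
    (hmuBar : ∀ i m j, muBar i m j = ∏ u ∈ Finset.range m, mu i (u + 1) j)
    (hgamBar : ∀ i m, gamBar i m = ∏ u ∈ Finset.range m, gam i u)
    -- sub-criticality: U_{ij} < ∞ for i ≠ j and L_j < ∞
    (hU : ∀ i j : Λ, i ≠ j → Summable (fun m : ℕ => lamBar i m j / muBar i m j))
    (hL : ∀ j : Λ, Summable (fun m : ℕ => lamBar j m j * gamBar j m / muBar j m j))
    (U : Λ → Λ → ℝ) (L : Λ → ℝ)
    (hUdef : ∀ i j, U i j = ∑' m : ℕ, lamBar i m j / muBar i m j)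
    (hLdef : ∀ j, L j = ∑' m : ℕ, lamBar j m j * gamBar j m / muBar j m j)
    (w : Λ → (Λ → ℕ) → ℝ)
    (hw : ∀ (j : Λ) (n : Λ → ℕ),
      w j n = (∏ q, lamBar q (n q) j / muBar q (n q) j) * gamBar j (n j)) :
    Summable (fun p : Λ × (Λ → ℕ) => w p.1 p.2) ∧
    (∑' p : Λ × (Λ → ℕ), w p.1 p.2 =
      ∑ j, L j * ∏ i ∈ Finset.univ.erase j, U i j) ∧
    (∑' p : Λ × (Λ → ℕ),
        w p.1 p.2 / (∑ j, L j * ∏ i ∈ Finset.univ.erase j, U i j) = 1) := by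
  have ratio_nonneg : ∀ i m j, 0 ≤ lamBar i m j / muBar i m j := fun i m j => by
    rw [hlamBar, hmuBar]
    exact div_nonneg (prod_nonneg fun u _ => hlam i u j) (prod_nonneg fun u _ => (hmu i _ j).le)
  have gamBar_nonneg : ∀ i m, 0 ≤ gamBar i m := fun i m => by
    rw [hgamBar]
    exact prod_nonneg fun u _ => (hgam i u).le
  have hw_row : ∀ j, HasSum (w j) (L j * ∏ i ∈ univ.erase j, U i j) := fun j => by
    have h := hasSum_pi_prod_mul_apply_of_nonneg j (a := fun q m => lamBar q m j / muBar q m j)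
      (S := L j) (fun q m => ratio_nonneg q m j) (gamBar_nonneg j)
      (fun i hij => hUdef i j ▸ (hU i j hij).hasSum)
      (hLdef j ▸ (hL j).hasSum.congr_fun fun m => div_mul_eq_mul_div _ _ _)
    exact h.congr_fun (hw j)
  have hw_sum := hasSum_prod_of_fintype_left (f := fun p => w p.1 p.2) hw_row
  have L_pos : ∀ j, 0 < L j := fun j => by
    rw [hLdef]
    calc (0 : ℝ) < 1 := one_pos
      _ = lamBar j 0 j * gamBar j 0 / muBar j 0 j := by simp [hlamBar, hmuBar, hgamBar]
      _ ≤ _ := le_hasSum (hL j).hasSum 0 fun m _ => by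
        rw [mul_div_right_comm]
        exact mul_nonneg (ratio_nonneg j m j) (gamBar_nonneg j m)
  have U_pos : ∀ i j, i ≠ j → 0 < U i j := fun i j hij => by
    rw [hUdef]
    calc (0 : ℝ) < 1 := one_pos
      _ = lamBar i 0 j / muBar i 0 j := by simp [hlamBar, hmuBar]
      _ ≤ _ := le_hasSum (hU i j hij).hasSum 0 fun m _ => ratio_nonneg i m j
  have Z_pos : 0 < ∑ j, L j * ∏ i ∈ univ.erase j, U i j :=
    sum_pos (fun j _ => mul_pos (L_pos j) (prod_pos fun i hi => U_pos i j (ne_of_mem_erase hi)))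
      univ_nonempty
  exact ⟨hw_sum.summable, hw_sum.tsum_eq, by rw [tsum_div_const, hw_sum.tsum_eq, div_self Z_pos.ne']⟩

/-- Theorem 3.2, partition function: under sub-criticality
(`U_{ij} < ∞` for `i ≠ j` and `L_j < ∞`), the weights `w(j,n)` are summable with
total sum `Ξ_Λ = Σ_j L_j ∏_{i≠j} U_{ij}`, and `π = w/Ξ_Λ` is a probability
distribution on `Λ × ℕ^Λ`. -/
theorem general_rw_jackson_partition_function
    (Λ : Type*) [Fintype Λ] [DecidableEq Λ] [Nonempty Λ]
    (lam mu : Λ → ℕ → Λ → ℝ) (gam : Λ → ℕ → ℝ)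
    (hlam : ∀ i m j, 0 ≤ lam i m j) (hmu : ∀ i m j, 0 < mu i m j)
    (hgam : ∀ i m, 0 < gam i m) (hgam0 : ∀ i, gam i 0 = 1)
    (lamBar muBar : Λ → ℕ → Λ → ℝ) (gamBar : Λ → ℕ → ℝ)
    (hlamBar : ∀ i m j, lamBar i m j = ∏ u ∈ Finset.range m, lam i u j)
    (hmuBar : ∀ i m j, muBar i m j = ∏ u ∈ Finset.range m, mu i (u + 1) j)
    (hgamBar : ∀ i m, gamBar i m = ∏ u ∈ Finset.range m, gam i u)
    -- sub-criticality: U_{ij} < ∞ for i ≠ j and L_j < ∞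
    (hU : ∀ i j : Λ, i ≠ j → Summable (fun m : ℕ => lamBar i m j / muBar i m j))
    (hL : ∀ j : Λ, Summable (fun m : ℕ => lamBar j m j * gamBar j m / muBar j m j))
    (U : Λ → Λ → ℝ) (L : Λ → ℝ)
    (hUdef : ∀ i j, U i j = ∑' m : ℕ, lamBar i m j / muBar i m j)
    (hLdef : ∀ j, L j = ∑' m : ℕ, lamBar j m j * gamBar j m / muBar j m j)
    (w : Λ → (Λ → ℕ) → ℝ)
    (hw : ∀ (j : Λ) (n : Λ → ℕ),
      w j n = (∏ q, lamBar q (n q) j / muBar q (n q) j) * gamBar j (n j)) :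
    Summable (fun p : Λ × (Λ → ℕ) => w p.1 p.2) ∧
    (∑' p : Λ × (Λ → ℕ), w p.1 p.2 =
      ∑ j, L j * ∏ i ∈ Finset.univ.erase j, U i j) ∧
    (∑' p : Λ × (Λ → ℕ),
        w p.1 p.2 / (∑ j, L j * ∏ i ∈ Finset.univ.erase j, U i j) = 1) :=
  general_rw_jackson_partition_function_general Λ lam mu gam hlam hmu hgam lamBar muBar gamBar
    hlamBar hmuBar hgamBar hU hL U L hUdef hLdef w hw
end

section
/- (Theorem 4.1, simple exclusion in a Jackson-type environment, closed-open network, detailed balance) Fix M with 1 ≤ M ≤ #Λ. Suppose for every y : Λ → {0,1}: (4.2a) λ_k(n_k−1;y)/μ_k(n_k;y) · β_{kl}(n_k,n_l;y) = λ_l(n_l;y)/μ_l(n_l+1;y) · β_{lk}(n_l+1,n_k−1;y) for k ≠ l with y_k = y_l = 0 and n_k ≥ 1; (4.2b) λ_j(n_j−1;y)/μ_j(n_j;y) · θ_{jk}(n_j,n_k;y) = λ_k(n_k;y)/μ_k(n_k+1;y) · θ_{kj}(n_k+1,n_j−1;y) for y_j = 1, y_k = 0, n_j ≥ 1; (4.3)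 τ_{jj'}(n;y) · ∏_{q∈Λ} λ̄_q(n_q;y)/μ̄_q(n_q;y) = τ_{j'j}(n;y+e^{j→j'}) · ∏_{q∈Λ} λ̄_q(n_q;y+e^{j→j'})/μ̄_q(n_q;y+e^{j→j'}) for y_j = 1, y_{j'} = 0; (4.4) λ_i(n_i−1;y)γ_i(n_i−1)/μ_i(n_i;y) · ε_{ij}(n_i,n_j;y) = λ_j(n_j;y)γ_j(n_j)/μ_j(n_j+1;y) · ε_{ji}(n_j+1,n_i−1;y) for i ≠ j with y_i = y_j = 1 and n_i ≥ 1. Then the weight w(y,n) = 1(|y| = M) · ∏_{q∈Λ} [λ̄_q(n_q;y)/μ̄_q(n_q;y)] · ∏_{j : y_j = 1} γ̄_j(n_j) satisfies the detailed balance equations: (i) w(y,n)·λ_p(n_p;y)·[γ_p(n_p)]^{y_p} = w(y, n+e^p)·μ_p(n_p+1;y) for every p ∈ Λ; (ii) w(y,n)·β_{kl}(n_k,n_l;y) = w(y, n+e^{k→l})·β_{lk}(n_l+1,n_k−1;y) for y_k = y_l = 0, k ≠ l, n_k ≥ 1; (iii) w(y,n)·ε_{ij}(n_i,n_j;y) =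 w(y, n+e^{i→j})·ε_{ji}(n_j+1,n_i−1;y) for y_i = y_j = 1, i ≠ j, n_i ≥ 1; (iv) w(y,n)·θ_{jk}(n_j,n_k;y) = w(y, n+e^{j→k})·θ_{kj}(n_k+1,n_j−1;y)·γ_j(n_j−1) for y_j = 1, y_k = 0, n_j ≥ 1; (v) w(y,n)·γ̄_j(n_j)^{−1}·τ_{jj'}(n;y) = w(y+e^{j→j'}, n)·γ̄_{j'}(n_{j'})^{−1}·τ_{j'j}(n;y+e^{j→j'}) for y_j = 1, y_{j'} = 0. -/
/-!
On configurations with `|y| = M`, the weight is a product of site weights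
`ψ_q(m) = λ̄_q(m;y)/μ̄_q(m;y) · γ̄_q(m)^{y_q}`, which obey the one-step recursion
`ψ_q(m+1) = ψ_q(m) · λ_q(m;y) γ_q(m)^{y_q} / μ_q(m+1;y)`. An arrival or a task jump changes
only one or two factors, so (i) is the recursion itself and (ii)–(iv) reduce to the local
conditions (4.2a), (4.4), (4.2b). A leap `j → j'` keeps `|y|` and the factors `λ̄/μ̄` are
handled by (4.3), while the product of the `γ̄`'s trades `γ̄_j(n_j)` for `γ̄_{j'}(n_{j'})`.
-/

/-- The `e^k` configuration increment: `n + e^k`. -/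
def bump {Λ : Type*} [DecidableEq Λ] (n : Λ → ℕ) (k : Λ) : Λ → ℕ :=
  fun l => n l + (if l = k then 1 else 0)

/-- The jump move `n + e^{i→k} = n - e^i + e^k`. -/
def move {Λ : Type*} [DecidableEq Λ] (n : Λ → ℕ) (i k : Λ) : Λ → ℕ :=
  fun l => n l - (if l = i then 1 else 0) + (if l = k then 1 else 0)

open Finset Function

section Moves

variable {Λ : Type*} [DecidableEq Λ]

lemma bump_eq_update (n : Λ → ℕ) (p : Λ) : bump n p = update n p (n p + 1) := by
  ext q
  by_cases hq : q = p
  · subst hq; simp [bump]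
  · simp [bump, hq]

lemma move_eq_update_update (n : Λ → ℕ) {i k : Λ} (hik : i ≠ k) :
    move n i k = update (update n i (n i - 1)) k (n k + 1) := by
  ext q
  by_cases hqk : q = k
  · subst hqk; simp [move, hik.symm]
  · by_cases hqi : q = i
    · subst hqi; simp [move, hik]
    · simp [move, hqi, hqk]

@[to_additive]
lemma Finset.prod_apply_update_of_mem {α M : Type*} [CommMonoid M] {s : Finset Λ} {p : Λ}
    (hp : p ∈ s) (ψ : Λ → α → M) (n : Λ → α) (a : α) :
    ∏ q ∈ s, ψ q (update n p a q) = ψ p a * ∏ q ∈ s.erase p, ψ q (n q) := by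
  rw [← mul_prod_erase s _ hp, update_self]
  congr 1
  exact prod_congr rfl fun q hq => by rw [update_of_ne (ne_of_mem_erase hq)]

@[to_additive]
lemma Fintype.prod_apply_update_update {α M : Type*} [CommMonoid M] [Fintype Λ] {i k : Λ}
    (hik : i ≠ k) (ψ : Λ → α → M) (n : Λ → α) (a b : α) :
    ∏ q, ψ q (update (update n i a) k b q) =
      ψ i a * ψ k b * ∏ q ∈ (univ.erase k).erase i, ψ q (n q) := by
  rw [prod_apply_update_of_mem (mem_univ k),
    prod_apply_update_of_mem (mem_erase.2 ⟨hik, mem_univ i⟩), mul_left_comm, mul_assoc]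

lemma sum_move [Fintype Λ] (n : Λ → ℕ) {i k : Λ} (hik : i ≠ k) (hni : 1 ≤ n i) :
    ∑ s, move n i k s = ∑ s, n s := by
  have h := Fintype.sum_apply_update_update hik (fun _ m => m) n (n i) (n k)
  rw [move_eq_update_update n hik, Fintype.sum_apply_update_update hik (fun _ m => m)]
  simp only [update_eq_self] at h
  omega

lemma move_le_one {y : Λ → ℕ} (hy : ∀ s, y s ≤ 1) {j j' : Λ} (hj : y j = 1) (hj' : y j' = 0)
    (s : Λ) : move y j j' s ≤ 1 := by
  have hjj' : j ≠ j' := by rintro rfl; omega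
  rw [move_eq_update_update y hjj']
  have := hy s
  simp only [update_apply]
  split_ifs <;> omega

end Moves

lemma prod_filter_eq_one_eq_prod_pow {Λ M : Type*} [CommMonoid M] [Fintype Λ] {y : Λ → ℕ}
    (hy : ∀ s, y s ≤ 1) (f : Λ → M) :
    ∏ j ∈ univ.filter (fun j => y j = 1), f j = ∏ j, f j ^ y j := by
  rw [prod_filter]
  refine prod_congr rfl fun j _ => ?_
  rcases Nat.le_one_iff_eq_zero_or_eq_one.1 (hy j) with h | h <;> simp [h]

section Products

variable {Λ : Type*} [Fintype Λ] [DecidableEq Λ]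

lemma prod_pow_mul_inv_eq_prod_pow_move_mul_inv {G : Type*} [CommGroupWithZero G] (f : Λ → G)
    {y : Λ → ℕ} {j j' : Λ} (hj : y j = 1) (hj' : y j' = 0) (hfj : f j ≠ 0) (hfj' : f j' ≠ 0) :
    (∏ q, f q ^ y q) * (f j)⁻¹ = (∏ q, f q ^ move y j j' q) * (f j')⁻¹ := by
  have hjj' : j ≠ j' := by rintro rfl; omega
  have hy : y = update (update y j 1) j' 0 := by simp [← hj, ← hj']
  rw [move_eq_update_update y hjj', hj, hj']
  conv_lhs => rw [hy]
  simp only [Fintype.prod_apply_update_update hjj' (fun q m => f q ^ m)]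
  simp only [Nat.sub_self, zero_add, pow_zero, pow_one, one_mul, mul_one]
  rw [mul_right_comm, mul_inv_cancel₀ hfj, mul_right_comm, mul_inv_cancel₀ hfj']

lemma prod_mul_eq_prod_bump_mul (ψ : Λ → ℕ → ℝ) (n : Λ → ℕ) (p : Λ) {r μ : ℝ} (hμ : μ ≠ 0)
    (hψ : ψ p (n p + 1) = ψ p (n p) * (r / μ)) :
    (∏ q, ψ q (n q)) * r = (∏ q, ψ q (bump n p q)) * μ := by
  rw [bump_eq_update, prod_apply_update_of_mem (mem_univ p), hψ,
    ← mul_prod_erase univ (fun q => ψ q (n q)) (mem_univ p)]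
  field_simp

lemma prod_mul_eq_prod_move_mul (ψ ρ : Λ → ℕ → ℝ) (hψ : ∀ q m, ψ q (m + 1) = ψ q m * ρ q m)
    (n : Λ → ℕ) {k l : Λ} (hkl : k ≠ l) (hnk : 1 ≤ n k) {B B' : ℝ}
    (h : ρ k (n k - 1) * B = ρ l (n l) * B') :
    (∏ q, ψ q (n q)) * B = (∏ q, ψ q (move n k l q)) * B' := by
  have hn := Fintype.prod_apply_update_update hkl ψ n (n k) (n l)
  simp only [update_eq_self] at hn
  obtain ⟨c, hc⟩ : ∃ c, n k = c + 1 := ⟨n k - 1, by omega⟩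
  rw [move_eq_update_update n hkl, Fintype.prod_apply_update_update hkl, hn, hψ l, hc,
    hψ k, Nat.add_sub_cancel]
  rw [hc, Nat.add_sub_cancel] at h
  linear_combination (ψ k c * ψ l (n l) * ∏ q ∈ (univ.erase l).erase k, ψ q (n q)) * h

end Products

section SiteWeight

variable {Λ : Type*} (lamBar muBar : Λ → ℕ → (Λ → ℕ) → ℝ) (gamBar : Λ → ℕ → ℝ)

noncomputable def siteWeight (y : Λ → ℕ) (q : Λ) (m : ℕ) : ℝ :=
  lamBar q m y / muBar q m y * gamBar q m ^ y q

variable {lamBar muBar gamBar}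

lemma prod_div_mul_prod_filter_eq_prod_siteWeight [Fintype Λ] {y : Λ → ℕ} (hy : ∀ s, y s ≤ 1)
    (n : Λ → ℕ) :
    (∏ q, lamBar q (n q) y / muBar q (n q) y) *
        ∏ j ∈ univ.filter (fun j => y j = 1), gamBar j (n j) =
      ∏ q, siteWeight lamBar muBar gamBar y q (n q) := by
  rw [prod_filter_eq_one_eq_prod_pow hy, ← prod_mul_distrib]
  rfl

lemma siteWeight_succ {lam mu : Λ → ℕ → (Λ → ℕ) → ℝ} {gam : Λ → ℕ → ℝ}
    (hlamBar : ∀ p m y, lamBar p m y = ∏ u ∈ range m, lam p u y)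
    (hmuBar : ∀ p m y, muBar p m y = ∏ u ∈ range m, mu p (u + 1) y)
    (hgamBar : ∀ p m, gamBar p m = ∏ u ∈ range m, gam p u) (y : Λ → ℕ) (q : Λ) (m : ℕ) :
    siteWeight lamBar muBar gamBar y q (m + 1) =
      siteWeight lamBar muBar gamBar y q m * (lam q m y * gam q m ^ y q / mu q (m + 1) y) := by
  simp only [siteWeight, hlamBar, hmuBar, hgamBar, prod_range_succ, mul_pow]
  ring

end SiteWeight

theorem exclusion_closed_open_detailed_balance_general
    (Λ : Type*) [Fintype Λ] [DecidableEq Λ]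
    (M : ℕ)
    (lam mu : Λ → ℕ → (Λ → ℕ) → ℝ) (gam : Λ → ℕ → ℝ)
    (hmu : ∀ p m y, 0 < mu p m y)
    (hgam : ∀ p m, 0 < gam p m)
    (lamBar muBar : Λ → ℕ → (Λ → ℕ) → ℝ) (gamBar : Λ → ℕ → ℝ)
    (hlamBar : ∀ p m y, lamBar p m y = ∏ u ∈ Finset.range m, lam p u y)
    (hmuBar : ∀ p m y, muBar p m y = ∏ u ∈ Finset.range m, mu p (u + 1) y)
    (hgamBar : ∀ p m, gamBar p m = ∏ u ∈ Finset.range m, gam p u)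
    (β θ ε : Λ → Λ → ℕ → ℕ → (Λ → ℕ) → ℝ) (τ : Λ → Λ → (Λ → ℕ) → (Λ → ℕ) → ℝ)
    -- (4.2a)
    (h42a : ∀ (y : Λ → ℕ), (∀ s, y s ≤ 1) → ∀ (k l : Λ) (a b : ℕ),
      k ≠ l → y k = 0 → y l = 0 → 1 ≤ a →
      lam k (a - 1) y / mu k a y * β k l a b y =
        lam l b y / mu l (b + 1) y * β l k (b + 1) (a - 1) y)
    -- (4.2b)
    (h42b : ∀ (y : Λ → ℕ), (∀ s, y s ≤ 1) → ∀ (j k : Λ) (a b : ℕ),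
      y j = 1 → y k = 0 → 1 ≤ a →
      lam j (a - 1) y / mu j a y * θ j k a b y =
        lam k b y / mu k (b + 1) y * θ k j (b + 1) (a - 1) y)
    -- (4.3)
    (h43 : ∀ (y : Λ → ℕ), (∀ s, y s ≤ 1) → ∀ (j j' : Λ) (n : Λ → ℕ),
      y j = 1 → y j' = 0 →
      τ j j' n y * ∏ q, lamBar q (n q) y / muBar q (n q) y =
        τ j' j n (move y j j') *
          ∏ q, lamBar q (n q) (move y j j') / muBar q (n q) (move y j j'))
    -- (4.4)
    (h44 : ∀ (y : Λ → ℕ), (∀ s, y s ≤ 1) → ∀ (i j : Λ) (a b : ℕ),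
      i ≠ j → y i = 1 → y j = 1 → 1 ≤ a →
      lam i (a - 1) y * gam i (a - 1) / mu i a y * ε i j a b y =
        lam j b y * gam j b / mu j (b + 1) y * ε j i (b + 1) (a - 1) y)
    (w : (Λ → ℕ) → (Λ → ℕ) → ℝ)
    (hw : ∀ (y n : Λ → ℕ), w y n =
      (if ∑ s, y s = M then (1 : ℝ) else 0) *
        (∏ q, lamBar q (n q) y / muBar q (n q) y) *
        ∏ j ∈ Finset.univ.filter (fun j => y j = 1), gamBar j (n j)) :
    ∀ (y : Λ → ℕ), (∀ s, y s ≤ 1) → ∀ n : Λ → ℕ,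
      -- (i) arrival at p paired with exit from p
      (∀ p, w y n * (lam p (n p) y * gam p (n p) ^ (y p)) =
        w y (bump n p) * mu p (n p + 1) y) ∧
      -- (ii) task jump between unloaded sites
      (∀ k l, y k = 0 → y l = 0 → k ≠ l → 1 ≤ n k →
        w y n * β k l (n k) (n l) y =
          w y (move n k l) * β l k (n l + 1) (n k - 1) y) ∧
      -- (iii) task jump between loaded sites
      (∀ i j, y i = 1 → y j = 1 → i ≠ j → 1 ≤ n i →
        w y n * ε i j (n i) (n j) y =
          w y (move n i j) * ε j i (n j + 1) (n i - 1) y) ∧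
      -- (iv) task jump from a loaded to an unloaded site
      (∀ j k, y j = 1 → y k = 0 → 1 ≤ n j →
        w y n * θ j k (n j) (n k) y =
          w y (move n j k) * (θ k j (n k + 1) (n j - 1) y * gam j (n j - 1))) ∧
      -- (v) leap of a distinguished customer
      (∀ j j', y j = 1 → y j' = 0 →
        w y n * (gamBar j (n j))⁻¹ * τ j j' n y =
          w (move y j j') n * (gamBar j' (n j'))⁻¹ * τ j' j n (move y j j')) := by
  intro y hy n
  have of_prod_eq : ∀ (n' : Λ → ℕ) (B B' : ℝ),
      (∏ q, siteWeight lamBar muBar gamBar y q (n q)) * B =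
        (∏ q, siteWeight lamBar muBar gamBar y q (n' q)) * B' → w y n * B = w y n' * B' :=
    fun n' B B' h => by
      rw [hw, hw, mul_assoc _ (∏ q, _), mul_assoc _ (∏ q, _),
        prod_div_mul_prod_filter_eq_prod_siteWeight hy,
        prod_div_mul_prod_filter_eq_prod_siteWeight hy, mul_assoc, mul_assoc, h]
  have hsucc := siteWeight_succ hlamBar hmuBar hgamBar y
  refine ⟨fun p => ?_, fun k l hk hl hkl hnk => ?_, fun i j hi hj hij hni => ?_,
    fun j k hj hk hnj => ?_, fun j j' hj hj' => ?_⟩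
  · exact of_prod_eq _ _ _ (prod_mul_eq_prod_bump_mul _ n p (hmu p _ y).ne' (hsucc p (n p)))
  · refine of_prod_eq _ _ _ (prod_mul_eq_prod_move_mul _ _ hsucc n hkl hnk ?_)
    simpa [hk, hl, Nat.sub_add_cancel hnk] using h42a y hy k l (n k) (n l) hkl hk hl hnk
  · refine of_prod_eq _ _ _ (prod_mul_eq_prod_move_mul _ _ hsucc n hij hni ?_)
    simpa [hi, hj, Nat.sub_add_cancel hni] using h44 y hy i j (n i) (n j) hij hi hj hni
  · have hjk : j ≠ k := by rintro rfl; omega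
    refine of_prod_eq _ _ _ (prod_mul_eq_prod_move_mul _ _ hsucc n hjk hnj ?_)
    have h := h42b y hy j k (n j) (n k) hj hk hnj
    simp only [hj, hk, pow_one, pow_zero, mul_one, Nat.sub_add_cancel hnj] at h ⊢
    linear_combination gam j (n j - 1) * h
  · have hjj' : j ≠ j' := by rintro rfl; omega
    have hgamBar_ne : ∀ p m, gamBar p m ≠ 0 := fun p m => by
      rw [hgamBar]; exact (prod_pos fun u _ => hgam p u).ne'
    have hG := prod_pow_mul_inv_eq_prod_pow_move_mul_inv (fun q => gamBar q (n q)) hj hj'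
      (hgamBar_ne j _) (hgamBar_ne j' _)
    rw [hw, hw, sum_move y hjj' hj.ge, prod_filter_eq_one_eq_prod_pow hy,
      prod_filter_eq_one_eq_prod_pow (move_le_one hy hj hj')]
    linear_combination (if ∑ s, y s = M then (1 : ℝ) else 0) *
      ((∏ q, gamBar q (n q) ^ move y j j' q) * (gamBar j' (n j'))⁻¹ * h43 y hy j j' n hj hj' +
        (∏ q, lamBar q (n q) y / muBar q (n q) y) * τ j j' n y * hG)

/-- Theorem 4.1, simple exclusion, closed-open network, detailed
balance: under symmetry conditions (4.2)-(4.4), the weights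
`w(y,n) = 1(|y|=M) ∏_q [λ̄_q(n_q;y)/μ̄_q(n_q;y)] ∏_{j:y_j=1} γ̄_j(n_j)` satisfy
detailed balance. Occupation configurations `y : Λ → {0,1}` are encoded as
`y : Λ → ℕ` with `∀ s, y s ≤ 1`. -/
theorem exclusion_closed_open_detailed_balance
    (Λ : Type*) [Fintype Λ] [DecidableEq Λ] [Nonempty Λ]
    (M : ℕ) (hM1 : 1 ≤ M) (hM2 : M ≤ Fintype.card Λ)
    (lam mu : Λ → ℕ → (Λ → ℕ) → ℝ) (gam : Λ → ℕ → ℝ)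
    (hlam : ∀ p m y, 0 ≤ lam p m y) (hmu : ∀ p m y, 0 < mu p m y)
    (hgam : ∀ p m, 0 < gam p m) (hgam0 : ∀ p, gam p 0 = 1)
    (lamBar muBar : Λ → ℕ → (Λ → ℕ) → ℝ) (gamBar : Λ → ℕ → ℝ)
    (hlamBar : ∀ p m y, lamBar p m y = ∏ u ∈ Finset.range m, lam p u y)
    (hmuBar : ∀ p m y, muBar p m y = ∏ u ∈ Finset.range m, mu p (u + 1) y)
    (hgamBar : ∀ p m, gamBar p m = ∏ u ∈ Finset.range m, gam p u)
    (β θ ε : Λ → Λ → ℕ → ℕ → (Λ → ℕ) → ℝ) (τ : Λ → Λ → (Λ → ℕ) → (Λ → ℕ) → ℝ)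
    (hβnn : ∀ k l a b y, 0 ≤ β k l a b y) (hθnn : ∀ j k a b y, 0 ≤ θ j k a b y)
    (hεnn : ∀ i j a b y, 0 ≤ ε i j a b y) (hτnn : ∀ j j' n y, 0 ≤ τ j j' n y)
    -- (4.2a)
    (h42a : ∀ (y : Λ → ℕ), (∀ s, y s ≤ 1) → ∀ (k l : Λ) (a b : ℕ),
      k ≠ l → y k = 0 → y l = 0 → 1 ≤ a →
      lam k (a - 1) y / mu k a y * β k l a b y =
        lam l b y / mu l (b + 1) y * β l k (b + 1) (a - 1) y)
    -- (4.2b)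
    (h42b : ∀ (y : Λ → ℕ), (∀ s, y s ≤ 1) → ∀ (j k : Λ) (a b : ℕ),
      y j = 1 → y k = 0 → 1 ≤ a →
      lam j (a - 1) y / mu j a y * θ j k a b y =
        lam k b y / mu k (b + 1) y * θ k j (b + 1) (a - 1) y)
    -- (4.3)
    (h43 : ∀ (y : Λ → ℕ), (∀ s, y s ≤ 1) → ∀ (j j' : Λ) (n : Λ → ℕ),
      y j = 1 → y j' = 0 →
      τ j j' n y * ∏ q, lamBar q (n q) y / muBar q (n q) y =
        τ j' j n (move y j j') *
          ∏ q, lamBar q (n q) (move y j j') / muBar q (n q) (move y j j'))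
    -- (4.4)
    (h44 : ∀ (y : Λ → ℕ), (∀ s, y s ≤ 1) → ∀ (i j : Λ) (a b : ℕ),
      i ≠ j → y i = 1 → y j = 1 → 1 ≤ a →
      lam i (a - 1) y * gam i (a - 1) / mu i a y * ε i j a b y =
        lam j b y * gam j b / mu j (b + 1) y * ε j i (b + 1) (a - 1) y)
    (w : (Λ → ℕ) → (Λ → ℕ) → ℝ)
    (hw : ∀ (y n : Λ → ℕ), w y n =
      (if ∑ s, y s = M then (1 : ℝ) else 0) *
        (∏ q, lamBar q (n q) y / muBar q (n q) y) *
        ∏ j ∈ Finset.univ.filter (fun j => y j = 1), gamBar j (n j)) :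
    ∀ (y : Λ → ℕ), (∀ s, y s ≤ 1) → ∀ n : Λ → ℕ,
      -- (i) arrival at p paired with exit from p
      (∀ p, w y n * (lam p (n p) y * gam p (n p) ^ (y p)) =
        w y (bump n p) * mu p (n p + 1) y) ∧
      -- (ii) task jump between unloaded sites
      (∀ k l, y k = 0 → y l = 0 → k ≠ l → 1 ≤ n k →
        w y n * β k l (n k) (n l) y =
          w y (move n k l) * β l k (n l + 1) (n k - 1) y) ∧
      -- (iii) task jump between loaded sites
      (∀ i j, y i = 1 → y j = 1 → i ≠ j → 1 ≤ n i →
        w y n * ε i j (n i) (n j) y =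
          w y (move n i j) * ε j i (n j + 1) (n i - 1) y) ∧
      -- (iv) task jump from a loaded to an unloaded site
      (∀ j k, y j = 1 → y k = 0 → 1 ≤ n j →
        w y n * θ j k (n j) (n k) y =
          w y (move n j k) * (θ k j (n k + 1) (n j - 1) y * gam j (n j - 1))) ∧
      -- (v) leap of a distinguished customer
      (∀ j j', y j = 1 → y j' = 0 →
        w y n * (gamBar j (n j))⁻¹ * τ j j' n y =
          w (move y j j') n * (gamBar j' (n j'))⁻¹ * τ j' j n (move y j j')) :=
  exclusion_closed_open_detailed_balance_general Λ M lam mu gam hmu hgam lamBar muBar gamBar hlamBar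
    hmuBar hgamBar β θ ε τ h42a h42b h43 h44 w hw
end

section
/- (Theorem 5.3, zero-range system, closed-closed network, detailed balance) Fix M ≥ 1 and N ∈ ℕ. Suppose the symmetry conditions hold: β_{kl}(n_k,n_l;y) = β_{lk}(n_l+1,n_k−1;y) for k ≠ l, y_k = y_l = 0, n_k ≥ 1; θ_{jk}(n_j,n_k;y) = θ_{kj}(n_k+1,n_j−1;y) for y_j ≥ 1, y_k = 0, n_j ≥ 1; (5.8) ε_{ij}(n_i,n_j;y)·[γ_i(n_i−1)]^{y_i} = [γ_j(n_j)]^{y_j}·ε_{ji}(n_j+1,n_i−1;y) for i ≠ j, y_i ≥ 1, y_j ≥ 1, n_i ≥ 1; and τ_{jj'}(n;y) = τ_{j'j}(n;y+e^{j→j'}) for y_j ≥ 1, j' ≠ j. Then on {(y,n) : |y| = M, |n| = N} the weight w(y,n) = ∏_{q∈Λ} [γ̄_q(n_q)]^{y_q} satisfies the detailed balance equations: (i) w(y,n)·β_{kl}(n_k,n_l;y) = w(y, n+e^{k→l})·β_{lk}(n_l+1,n_k−1;y) for y_k = y_l = 0, k ≠ l, n_k ≥ 1; (ii) w(y,n)·ε_{ij}(n_i,n_j;y)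 = w(y, n+e^{i→j})·ε_{ji}(n_j+1,n_i−1;y) for y_i ≥ 1, y_j ≥ 1, i ≠ j, n_i ≥ 1; (iii) w(y,n)·θ_{jk}(n_j,n_k;y) = w(y, n+e^{j→k})·θ_{kj}(n_k+1,n_j−1;y)·[γ_j(n_j−1)]^{y_j} for y_j ≥ 1, y_k = 0, n_j ≥ 1; (iv) w(y,n)·θ_{kj}(n_k,n_j;y)·[γ_j(n_j)]^{y_j} = w(y, n+e^{k→j})·θ_{jk}(n_j+1,n_k−1;y) for y_j ≥ 1, y_k = 0, n_k ≥ 1; (v) w(y,n)·[γ̄_j(n_j)]^{−y_j}·τ_{jj'}(n;y)·[γ̄_{j'}(n_{j'})]^{−y_{j'}} = w(y', n)·[γ̄_j(n_j)]^{−y'_j}·τ_{j'j}(n;y')·[γ̄_{j'}(n_{j'})]^{−y'_{j'}}, where y' = y + e^{j→j'}, for y_j ≥ 1, j' ≠ j. -/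
/-!
The weight is a product of one factor per site, so a move `e^{i→k}` only changes the
factors at `i` and `k`. Since `γ̄_p(m+1) = γ̄_p(m) γ_p(m)`, moving an ordinary customer from
`i` to `k` multiplies the weight by `γ_k(n_k)^{y_k} / γ_i(n_i - 1)^{y_i}`; this ratio is `1`
between unloaded sites, and in the other cases it is exactly the factor that the symmetry
conditions on `β`, `θ`, `ε` compensate. Moving a distinguished customer from `j` to `j'`
changes only the exponents at `j` and `j'`, and (v) divides exactly those two factors out.
-/

section Move

variable {Λ : Type*} [DecidableEq Λ] (n : Λ → ℕ) {i k : Λ}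

lemma move_apply_left (hik : i ≠ k) : move n i k i = n i - 1 := by
  simp [move, hik]

lemma move_apply_right (hik : i ≠ k) : move n i k k = n k + 1 := by
  simp [move, hik.symm]

lemma move_apply_of_ne {q : Λ} (hi : q ≠ i) (hk : q ≠ k) : move n i k q = n q := by
  simp [move, hi, hk]

end Move

section Products

variable {ι : Type*} [Fintype ι] [DecidableEq ι] {i k : ι}

lemma prod_mul_eq_prod_mul_of_eq_off_pair {M : Type*} [CommMonoid M] {f g : ι → M}
    (hik : i ≠ k) (h : ∀ q, q ≠ i → q ≠ k → f q = g q) :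
    (∏ q, f q) * (g i * g k) = (∏ q, g q) * (f i * f k) := by
  have hrest : ∏ q ∈ Finset.univ \ {i, k}, f q = ∏ q ∈ Finset.univ \ {i, k}, g q :=
    Finset.prod_congr rfl fun q hq => by
      simp only [Finset.mem_sdiff, Finset.mem_univ, Finset.mem_insert, Finset.mem_singleton,
        true_and, not_or] at hq
      exact h q hq.1 hq.2
  rw [← Finset.prod_sdiff (Finset.subset_univ {i, k}), Finset.prod_pair hik,
    ← Finset.prod_sdiff (Finset.subset_univ {i, k}) (f := g), Finset.prod_pair hik, hrest]
  ac_rfl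

lemma prod_mul_inv_mul_inv_eq_of_eq_off_pair {K : Type*} [Field K] {f g : ι → K}
    (hik : i ≠ k) (h : ∀ q, q ≠ i → q ≠ k → f q = g q) (hf : ∀ q, f q ≠ 0)
    (hg : ∀ q, g q ≠ 0) :
    (∏ q, f q) * (f i)⁻¹ * (f k)⁻¹ = (∏ q, g q) * (g i)⁻¹ * (g k)⁻¹ := by
  have hfg := prod_mul_eq_prod_mul_of_eq_off_pair hik h
  field_simp [hf i, hf k, hg i, hg k]
  linear_combination hfg

lemma prod_pow_move_mul_pow {R : Type*} [CommRing R] [IsDomain R] {G g : ι → ℕ → R}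
    (hG : ∀ p m, G p (m + 1) = G p m * g p m) (hG0 : ∀ p m, G p m ≠ 0)
    (y n : ι → ℕ) (hik : i ≠ k) (hn : 1 ≤ n i) :
    (∏ q, G q (move n i k q) ^ y q) * g i (n i - 1) ^ y i =
      (∏ q, G q (n q) ^ y q) * g k (n k) ^ y k := by
  have hfg := prod_mul_eq_prod_mul_of_eq_off_pair (f := fun q => G q (move n i k q) ^ y q)
    (g := fun q => G q (n q) ^ y q) hik fun q hi hk => by rw [move_apply_of_ne n hi hk]
  have hGi : G i (n i) = G i (n i - 1) * g i (n i - 1) := by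
    rw [← hG, Nat.sub_add_cancel hn]
  simp only [move_apply_left n hik, move_apply_right n hik, hGi, hG, mul_pow] at hfg
  refine mul_right_cancel₀ (b := G i (n i - 1) ^ y i * G k (n k) ^ y k)
    (mul_ne_zero (pow_ne_zero _ (hG0 _ _)) (pow_ne_zero _ (hG0 _ _))) ?_
  linear_combination hfg

end Products

theorem zero_range_closed_closed_detailed_balance_general
    (Λ : Type*) [Fintype Λ] [DecidableEq Λ]
    (M : ℕ) (N : ℕ)
    (gam : Λ → ℕ → ℝ)
    (hgam : ∀ p m, 0 < gam p m)
    (gamBar : Λ → ℕ → ℝ)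
    (hgamBar : ∀ p m, gamBar p m = ∏ u ∈ Finset.range m, gam p u)
    (β θ ε : Λ → Λ → ℕ → ℕ → (Λ → ℕ) → ℝ) (τ : Λ → Λ → (Λ → ℕ) → (Λ → ℕ) → ℝ)
    -- symmetry conditions
    (hβ : ∀ (y : Λ → ℕ) (k l : Λ) (a b : ℕ),
      k ≠ l → y k = 0 → y l = 0 → 1 ≤ a →
      β k l a b y = β l k (b + 1) (a - 1) y)
    (hθ : ∀ (y : Λ → ℕ) (j k : Λ) (a b : ℕ),
      1 ≤ y j → y k = 0 → 1 ≤ a →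
      θ j k a b y = θ k j (b + 1) (a - 1) y)
    -- (5.8)
    (hε : ∀ (y : Λ → ℕ) (i j : Λ) (a b : ℕ),
      i ≠ j → 1 ≤ y i → 1 ≤ y j → 1 ≤ a →
      ε i j a b y * gam i (a - 1) ^ (y i) =
        gam j b ^ (y j) * ε j i (b + 1) (a - 1) y)
    (hτ : ∀ (y : Λ → ℕ) (j j' : Λ) (n : Λ → ℕ),
      1 ≤ y j → j' ≠ j → τ j j' n y = τ j' j n (move y j j'))
    (w : (Λ → ℕ) → (Λ → ℕ) → ℝ)
    (hw : ∀ (y n : Λ → ℕ), w y n = ∏ q, gamBar q (n q) ^ (y q)) :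
    ∀ (y : Λ → ℕ), ∑ s, y s = M → ∀ n : Λ → ℕ, ∑ s, n s = N →
      -- (i) task jump between unloaded sites
      (∀ k l, y k = 0 → y l = 0 → k ≠ l → 1 ≤ n k →
        w y n * β k l (n k) (n l) y =
          w y (move n k l) * β l k (n l + 1) (n k - 1) y) ∧
      -- (ii) task jump between loaded sites
      (∀ i j, 1 ≤ y i → 1 ≤ y j → i ≠ j → 1 ≤ n i →
        w y n * ε i j (n i) (n j) y =
          w y (move n i j) * ε j i (n j + 1) (n i - 1) y) ∧
      -- (iii) task jump from a loaded to an unloaded site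
      (∀ j k, 1 ≤ y j → y k = 0 → 1 ≤ n j →
        w y n * θ j k (n j) (n k) y =
          w y (move n j k) *
            (θ k j (n k + 1) (n j - 1) y * gam j (n j - 1) ^ (y j))) ∧
      -- (iv) task jump from an unloaded to a loaded site
      (∀ j k, 1 ≤ y j → y k = 0 → 1 ≤ n k →
        w y n * (θ k j (n k) (n j) y * gam j (n j) ^ (y j)) =
          w y (move n k j) * θ j k (n j + 1) (n k - 1) y) ∧
      -- (v) leap of a distinguished customer
      (∀ j j', 1 ≤ y j → j' ≠ j →
        w y n * (gamBar j (n j) ^ (y j))⁻¹ * τ j j' n y *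
            (gamBar j' (n j') ^ (y j'))⁻¹ =
          w (move y j j') n * (gamBar j (n j) ^ (move y j j' j))⁻¹ *
            τ j' j n (move y j j') *
            (gamBar j' (n j') ^ (move y j j' j'))⁻¹) := by
  intro y _ n _
  have hG : ∀ p m, gamBar p (m + 1) = gamBar p m * gam p m := fun p m => by
    rw [hgamBar, hgamBar, Finset.prod_range_succ]
  have hG0 : ∀ p m, gamBar p m ≠ 0 := fun p m => by
    rw [hgamBar]; exact Finset.prod_ne_zero_iff.2 fun u _ => (hgam p u).ne'
  have hw_move : ∀ i k, i ≠ k → 1 ≤ n i →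
      w y (move n i k) * gam i (n i - 1) ^ y i = w y n * gam k (n k) ^ y k :=
    fun i k hik hni => by simpa only [hw] using prod_pow_move_mul_pow hG hG0 y n hik hni
  refine ⟨?_, ?_, ?_, ?_, ?_⟩
  · intro k l hyk hyl hkl hnk
    have hwkl := hw_move k l hkl hnk
    rw [hyk, hyl, pow_zero, pow_zero, mul_one, mul_one] at hwkl
    rw [hwkl, hβ y k l _ _ hkl hyk hyl hnk]
  · intro i j hyi hyj hij hni
    refine mul_right_cancel₀ (pow_ne_zero (y i) (hgam i (n i - 1)).ne') ?_
    linear_combination w y n * hε y i j _ _ hij hyi hyj hni -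
      ε j i (n j + 1) (n i - 1) y * hw_move i j hij hni
  · intro j k hyj hyk hnj
    have hwjk := hw_move j k (by rintro rfl; omega) hnj
    rw [hyk, pow_zero, mul_one] at hwjk
    rw [← hwjk, hθ y j k _ _ hyj hyk hnj]
    ring
  · intro j k hyj hyk hnk
    have hwkj := hw_move k j (by rintro rfl; omega) hnk
    rw [hyk, pow_zero, mul_one] at hwkj
    have hθkj := hθ y j k (n j + 1) (n k - 1) hyj hyk (Nat.le_add_left 1 _)
    rw [Nat.sub_add_cancel hnk, Nat.add_sub_cancel] at hθkj
    rw [hwkj, hθkj]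
    ring
  · intro j j' hyj hj'j
    have hweight := prod_mul_inv_mul_inv_eq_of_eq_off_pair (f := fun q => gamBar q (n q) ^ y q)
      (g := fun q => gamBar q (n q) ^ move y j j' q) hj'j.symm
      (fun q hj hj' => by rw [move_apply_of_ne y hj hj'])
      (fun q => pow_ne_zero _ (hG0 _ _)) (fun q => pow_ne_zero _ (hG0 _ _))
    rw [hw, hw, ← hτ y j j' n hyj hj'j]
    linear_combination τ j j' n y * hweight

/-- Theorem 5.3, zero-range system, closed-closed network,
detailed balance: under the symmetry conditions (including (5.8)), on
`{(y,n) : |y|=M, |n|=N}` the weights `w(y,n) = ∏_q [γ̄_q(n_q)]^{y_q}` satisfy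
detailed balance. Here `y : Λ → ℕ` counts distinguished customers per site. -/
theorem zero_range_closed_closed_detailed_balance
    (Λ : Type*) [Fintype Λ] [DecidableEq Λ] [Nonempty Λ]
    (M : ℕ) (hM : 1 ≤ M) (N : ℕ)
    (gam : Λ → ℕ → ℝ)
    (hgam : ∀ p m, 0 < gam p m) (hgam0 : ∀ p, gam p 0 = 1)
    (gamBar : Λ → ℕ → ℝ)
    (hgamBar : ∀ p m, gamBar p m = ∏ u ∈ Finset.range m, gam p u)
    (β θ ε : Λ → Λ → ℕ → ℕ → (Λ → ℕ) → ℝ) (τ : Λ → Λ → (Λ → ℕ) → (Λ → ℕ) → ℝ)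
    (hβnn : ∀ k l a b y, 0 ≤ β k l a b y) (hθnn : ∀ j k a b y, 0 ≤ θ j k a b y)
    (hεnn : ∀ i j a b y, 0 ≤ ε i j a b y) (hτnn : ∀ j j' n y, 0 ≤ τ j j' n y)
    -- symmetry conditions
    (hβ : ∀ (y : Λ → ℕ) (k l : Λ) (a b : ℕ),
      k ≠ l → y k = 0 → y l = 0 → 1 ≤ a →
      β k l a b y = β l k (b + 1) (a - 1) y)
    (hθ : ∀ (y : Λ → ℕ) (j k : Λ) (a b : ℕ),
      1 ≤ y j → y k = 0 → 1 ≤ a →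
      θ j k a b y = θ k j (b + 1) (a - 1) y)
    -- (5.8)
    (hε : ∀ (y : Λ → ℕ) (i j : Λ) (a b : ℕ),
      i ≠ j → 1 ≤ y i → 1 ≤ y j → 1 ≤ a →
      ε i j a b y * gam i (a - 1) ^ (y i) =
        gam j b ^ (y j) * ε j i (b + 1) (a - 1) y)
    (hτ : ∀ (y : Λ → ℕ) (j j' : Λ) (n : Λ → ℕ),
      1 ≤ y j → j' ≠ j → τ j j' n y = τ j' j n (move y j j'))
    (w : (Λ → ℕ) → (Λ → ℕ) → ℝ)
    (hw : ∀ (y n : Λ → ℕ), w y n = ∏ q, gamBar q (n q) ^ (y q)) :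
    ∀ (y : Λ → ℕ), ∑ s, y s = M → ∀ n : Λ → ℕ, ∑ s, n s = N →
      -- (i) task jump between unloaded sites
      (∀ k l, y k = 0 → y l = 0 → k ≠ l → 1 ≤ n k →
        w y n * β k l (n k) (n l) y =
          w y (move n k l) * β l k (n l + 1) (n k - 1) y) ∧
      -- (ii) task jump between loaded sites
      (∀ i j, 1 ≤ y i → 1 ≤ y j → i ≠ j → 1 ≤ n i →
        w y n * ε i j (n i) (n j) y =
          w y (move n i j) * ε j i (n j + 1) (n i - 1) y) ∧
      -- (iii) task jump from a loaded to an unloaded site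
      (∀ j k, 1 ≤ y j → y k = 0 → 1 ≤ n j →
        w y n * θ j k (n j) (n k) y =
          w y (move n j k) *
            (θ k j (n k + 1) (n j - 1) y * gam j (n j - 1) ^ (y j))) ∧
      -- (iv) task jump from an unloaded to a loaded site
      (∀ j k, 1 ≤ y j → y k = 0 → 1 ≤ n k →
        w y n * (θ k j (n k) (n j) y * gam j (n j) ^ (y j)) =
          w y (move n k j) * θ j k (n j + 1) (n k - 1) y) ∧
      -- (v) leap of a distinguished customer
      (∀ j j', 1 ≤ y j → j' ≠ j →
        w y n * (gamBar j (n j) ^ (y j))⁻¹ * τ j j' n y *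
            (gamBar j' (n j') ^ (y j'))⁻¹ =
          w (move y j j') n * (gamBar j (n j) ^ (move y j j' j))⁻¹ *
            τ j' j n (move y j j') *
            (gamBar j' (n j') ^ (move y j j' j'))⁻¹) :=
  zero_range_closed_closed_detailed_balance_general Λ M N gam hgam gamBar hgamBar β θ ε τ hβ hθ hε
    hτ w hw
end
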